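/- arXiv:2512.20656 — 6 statements merged into one kernel-verified Lean document; each statement's English description precedes it below -/
import Mathlib

section
/- Let I ⊆ ℝ be an open interval, let g, a, q : ℝ → ℝ with g differentiable on I and g(x) ≠ 0 for all x ∈ I, and let a, q be arbitrary functions on I. Suppose A, B : ℝ → ℝ are differentiable on I with A'(x) = a(x)/g(x) and B'(x) = (a(x)/g(x))·exp(A(x)) for all x ∈ I. Then for every constant c₀ ∈ ℝ, the function y(x) = exp(−A(x))·(c₀ + B(x)) is differentiable on I and satisfies the special second-kind Abel equation (g'(x) + g(x)·q(x)·y(x))·y'(x) = −a(x)·q(x)·y(x)² + a(x)·(q(x) − g'(x)/g(x))·y(x) + a(x)·g'(x)/g(x) for all x ∈ I. -/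
/-!
The right-hand side of the Abel equation factors as `(g' + g q y) · (a / g) · (1 - y)`, so every
solution of the linear equation `y' = (a / g) (1 - y)` solves it. Variation of constants solves
that linear equation by `y = exp(-A) (c₀ + B)`: with `A' = a / g` and `B' = (a / g) exp A`,
`y' = -A' y + exp(-A) B' = (a / g) (1 - y)`.
-/

open Real

theorem hasDerivAt_exp_neg_mul_const_add {A B : ℝ → ℝ} {f x : ℝ} (c₀ : ℝ)
    (hA : HasDerivAt A f x) (hB : HasDerivAt B (f * exp (A x)) x) :
    HasDerivAt (fun t => exp (-A t) * (c₀ + B t))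
      (f * (1 - exp (-A x) * (c₀ + B x))) x := by
  have hexp_inv : exp (-A x) * exp (A x) = 1 := by rw [← exp_add, neg_add_cancel, exp_zero]
  refine (hA.neg.exp.mul (hB.const_add c₀)).congr_deriv ?_
  linear_combination f * hexp_inv

theorem abel_special_rhs_eq_mul_linear_rhs {g g' a q y : ℝ} (hg : g ≠ 0) :
    -a * q * y ^ 2 + a * (q - g' / g) * y + a * (g' / g) =
      (g' + g * q * y) * (a / g * (1 - y)) := by
  field_simp
  ring

theorem abel_special_solution_general (p r : ℝ) (g a q A B : ℝ → ℝ)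
    (hgne : ∀ x ∈ Set.Ioo p r, g x ≠ 0)
    (hA : ∀ x ∈ Set.Ioo p r, DifferentiableAt ℝ A x ∧ deriv A x = a x / g x)
    (hB : ∀ x ∈ Set.Ioo p r, DifferentiableAt ℝ B x ∧
      deriv B x = (a x / g x) * Real.exp (A x))
    (c₀ : ℝ) :
    ∀ x ∈ Set.Ioo p r,
      DifferentiableAt ℝ (fun t => Real.exp (-A t) * (c₀ + B t)) x ∧
      (deriv g x + g x * q x * (Real.exp (-A x) * (c₀ + B x))) *
          deriv (fun t => Real.exp (-A t) * (c₀ + B t)) x =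
        -a x * q x * (Real.exp (-A x) * (c₀ + B x)) ^ 2 +
          a x * (q x - deriv g x / g x) * (Real.exp (-A x) * (c₀ + B x)) +
          a x * (deriv g x / g x) := by
  intro x hx
  obtain ⟨hA_diff, hA_deriv⟩ := hA x hx
  obtain ⟨hB_diff, hB_deriv⟩ := hB x hx
  have hy := hasDerivAt_exp_neg_mul_const_add c₀ (hA_deriv ▸ hA_diff.hasDerivAt)
    (hB_deriv ▸ hB_diff.hasDerivAt)
  exact ⟨hy.differentiableAt, by rw [hy.deriv, abel_special_rhs_eq_mul_linear_rhs (hgne x hx)]⟩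

/-- The explicit quadrature formula `y = exp(-A) * (c₀ + B)` solves the
special second-kind Abel equation (2) on the open interval `Ioo p r`. -/
theorem abel_special_solution (p r : ℝ) (g a q A B : ℝ → ℝ)
    (hg : ∀ x ∈ Set.Ioo p r, DifferentiableAt ℝ g x)
    (hgne : ∀ x ∈ Set.Ioo p r, g x ≠ 0)
    (hA : ∀ x ∈ Set.Ioo p r, DifferentiableAt ℝ A x ∧ deriv A x = a x / g x)
    (hB : ∀ x ∈ Set.Ioo p r, DifferentiableAt ℝ B x ∧
      deriv B x = (a x / g x) * Real.exp (A x))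
    (c₀ : ℝ) :
    ∀ x ∈ Set.Ioo p r,
      DifferentiableAt ℝ (fun t => Real.exp (-A t) * (c₀ + B t)) x ∧
      (deriv g x + g x * q x * (Real.exp (-A x) * (c₀ + B x))) *
          deriv (fun t => Real.exp (-A t) * (c₀ + B t)) x =
        -a x * q x * (Real.exp (-A x) * (c₀ + B x)) ^ 2 +
          a x * (q x - deriv g x / g x) * (Real.exp (-A x) * (c₀ + B x)) +
          a x * (deriv g x / g x) :=
  abel_special_solution_general p r g a q A B hgne hA hB c₀
end

section
/- Let I ⊆ ℝ be an open interval, let g0, g1, f0, f1, f2 : ℝ → ℝ be given functions, and let u, z, λ : ℝ → ℝ be differentiable at x ∈ I with u(x) ≠ 0. Set y(x) = u(x)·z(x) + λ(x). Then y solves the second-kind Abel equation at x, i.e. (g0(x) + g1(x)·y(x))·y'(x) = f2(x)·y(x)² + f1(x)·y(x) + f0(x), if and only if z satisfies the transformed equation at x: (g0(x) + g1(x)·λ(x) + g1(x)·u(x)·z(x))·z'(x) = (f2(x)·u(x) − g1(x)·u'(x))·z(x)² + (f1(x) + 2·f2(x)·λ(x) − g1(x)·λ'(x) − (g0(x) +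 g1(x)·λ(x))·u'(x)/u(x))·z(x) + (f0(x) + f1(x)·λ(x) + f2(x)·λ(x)² − (g0(x) + g1(x)·λ(x))·λ'(x))/u(x). -/
/-! Since `y' = u' z + u z' + λ'`, equation (4) multiplied by `u` is equation (1) expanded in `z`. -/

theorem abel_substitution_iff_of_ne_zero {g0 g1 f0 f1 f2 u u' z z' l l' : ℝ} (hu : u ≠ 0) :
    ((g0 + g1 * (u * z + l)) * (u' * z + u * z' + l') =
        f2 * (u * z + l) ^ 2 + f1 * (u * z + l) + f0) ↔
      ((g0 + g1 * l + g1 * u * z) * z' =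
        (f2 * u - g1 * u') * z ^ 2 +
          (f1 + 2 * f2 * l - g1 * l' - (g0 + g1 * l) * u' / u) * z +
          (f0 + f1 * l + f2 * l ^ 2 - (g0 + g1 * l) * l') / u) := by
  constructor <;> intro h
  · field_simp
    linear_combination h
  · field_simp at h
    linear_combination h

theorem abel_substitution_uz_general (g0 g1 f0 f1 f2 u z l : ℝ → ℝ) (x : ℝ)
    (hu : DifferentiableAt ℝ u x) (hz : DifferentiableAt ℝ z x)
    (hl : DifferentiableAt ℝ l x) (hune : u x ≠ 0) :
    ((g0 x + g1 x * (u x * z x + l x)) * deriv (fun t => u t * z t + l t) x =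
        f2 x * (u x * z x + l x) ^ 2 + f1 x * (u x * z x + l x) + f0 x) ↔
      ((g0 x + g1 x * l x + g1 x * u x * z x) * deriv z x =
        (f2 x * u x - g1 x * deriv u x) * (z x) ^ 2 +
          (f1 x + 2 * f2 x * l x - g1 x * deriv l x -
            (g0 x + g1 x * l x) * deriv u x / u x) * z x +
          (f0 x + f1 x * l x + f2 x * (l x) ^ 2 -
            (g0 x + g1 x * l x) * deriv l x) / u x) := by
  have hy : deriv (fun t => u t * z t + l t) x = deriv u x * z x + u x * deriv z x + deriv l x :=
    ((hu.hasDerivAt.mul hz.hasDerivAt).add hl.hasDerivAt).deriv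
  rw [hy]
  exact abel_substitution_iff_of_ne_zero hune

/-- the substitution `y = u·z + λ` transforms the second-kind Abel
equation (1) into the equation (4) of the paper, as a pointwise equivalence. -/
theorem abel_substitution_uz (p r : ℝ) (g0 g1 f0 f1 f2 u z l : ℝ → ℝ) (x : ℝ)
    (hx : x ∈ Set.Ioo p r)
    (hu : DifferentiableAt ℝ u x) (hz : DifferentiableAt ℝ z x)
    (hl : DifferentiableAt ℝ l x) (hune : u x ≠ 0) :
    ((g0 x + g1 x * (u x * z x + l x)) * deriv (fun t => u t * z t + l t) x =
        f2 x * (u x * z x + l x) ^ 2 + f1 x * (u x * z x + l x) + f0 x) ↔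
      ((g0 x + g1 x * l x + g1 x * u x * z x) * deriv z x =
        (f2 x * u x - g1 x * deriv u x) * (z x) ^ 2 +
          (f1 x + 2 * f2 x * l x - g1 x * deriv l x -
            (g0 x + g1 x * l x) * deriv u x / u x) * z x +
          (f0 x + f1 x * l x + f2 x * (l x) ^ 2 -
            (g0 x + g1 x * l x) * deriv l x) / u x) :=
  abel_substitution_uz_general g0 g1 f0 f1 f2 u z l x hu hz hl hune
end

section
/- Let x ∈ ℝ and let g0, g1, f1, f2, g, g', a, q, u, u', λ, λ' be real numbers (values and derivative-values of the corresponding functions at x) with g ≠ 0, g1 ≠ 0 and u ≠ 0. Assume the matching conditions (5a): g' = g0 + g1·λ and g·q = g1·u and −a·q = f2·u − g1·u', together with condition (5b): a·(q − g'/g) = f1 + 2·f2·λ − g1·λ' − (g0 + g1·λ)·u'/u. Then (u' + λ') − (f2/g1)·(u + λ) − (1/g1)·(f1 − (g0/g1)·f2) = 0. -/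
/-!
Eliminating `q` through `g q = g₁ u` turns the second relation of (5a) into
`a g₁ u = g (g₁ u' - f₂ u)`. Substituting this into (5b), cleared of denominators, leaves
`g u (g₁² (u' + λ') - g₁ f₂ (u + λ) - (g₁ f₁ - g₀ f₂)) = 0`, and (6a) is this identity
divided by `g u g₁²`.
-/

theorem abel_matching_cleared {R : Type*} [CommRing R] (g0 g1 f1 f2 g a q u u' l l' : R)
    (h5a2 : g * q = g1 * u) (h5a3 : -a * q = f2 * u - g1 * u')
    (h5b : a * (g * q - (g0 + g1 * l)) * u =
      g * (u * (f1 + 2 * f2 * l - g1 * l') - (g0 + g1 * l) * u')) :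
    g * u * (g1 ^ 2 * (u' + l') - g1 * f2 * (u + l) - (g1 * f1 - g0 * f2)) = 0 := by
  linear_combination g1 * h5b + (a * (g * q - (g0 + g1 * l)) - g * (g1 * u' - f2 * u)) * h5a2 +
    g * (g * q - (g0 + g1 * l)) * h5a3

theorem abel_matching_6a_general (g0 g1 f1 f2 g g' a q u u' l l' : ℝ)
    (hg : g ≠ 0) (hg1 : g1 ≠ 0) (hu : u ≠ 0)
    (h5a1 : g' = g0 + g1 * l) (h5a2 : g * q = g1 * u) (h5a3 : -a * q = f2 * u - g1 * u')
    (h5b : a * (q - g' / g) = f1 + 2 * f2 * l - g1 * l' - (g0 + g1 * l) * u' / u) :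
    (u' + l') - (f2 / g1) * (u + l) - (1 / g1) * (f1 - (g0 / g1) * f2) = 0 := by
  subst h5a1
  have h5b_cleared : a * (g * q - (g0 + g1 * l)) * u =
      g * (u * (f1 + 2 * f2 * l - g1 * l') - (g0 + g1 * l) * u') := by
    field_simp at h5b
    linear_combination h5b
  have h6a_cleared : g1 ^ 2 * (u' + l') - g1 * f2 * (u + l) - (g1 * f1 - g0 * f2) = 0 :=
    (mul_eq_zero.1 (abel_matching_cleared g0 g1 f1 f2 g a q u u' l l' h5a2 h5a3 h5b_cleared)
      ).resolve_left (mul_ne_zero hg hu)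
  field_simp
  linear_combination h6a_cleared

/-- from the coefficient-matching relations (5a) and (5b) of the paper,
the linear relation (6a) for `u + λ` follows. -/
theorem abel_matching_6a (x g0 g1 f1 f2 g g' a q u u' l l' : ℝ)
    (hg : g ≠ 0) (hg1 : g1 ≠ 0) (hu : u ≠ 0)
    (h5a1 : g' = g0 + g1 * l) (h5a2 : g * q = g1 * u) (h5a3 : -a * q = f2 * u - g1 * u')
    (h5b : a * (q - g' / g) = f1 + 2 * f2 * l - g1 * l' - (g0 + g1 * l) * u' / u) :
    (u' + l') - (f2 / g1) * (u + l) - (1 / g1) * (f1 - (g0 / g1) * f2) = 0 :=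
  abel_matching_6a_general g0 g1 f1 f2 g g' a q u u' l l' hg hg1 hu h5a1 h5a2 h5a3 h5b
end

section
/- Let x ∈ ℝ and let g0, g1, f0, f1, f2, g, g', a, q, u, u', λ, λ' be real numbers (values and derivative-values of the corresponding functions at x) with g ≠ 0, g1 ≠ 0, u ≠ 0 and g0 + g1·λ ≠ 0. Assume the matching conditions (5a): g' = g0 + g1·λ and g·q = g1·u and −a·q = f2·u − g1·u', together with condition (5c): a·g'/g = (f0 + f1·λ + f2·λ² − (g0 + g1·λ)·λ')/u. Then (u' + λ') − (f2/g1)·(u + λ) − (f0 + (f1 − (g0/g1)·f2)·λ)/(g0 + g1·λ) = 0. -/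
/-!
Eliminating `q` between the two relations (5a) expresses `a u / g` as `u' - (f2/g1) u`, while
(5c), multiplied by `u / g'`, expresses the same quantity as `F(λ)/G(λ) - λ'`, where
`F(λ) = f0 + f1 λ + f2 λ²` and `G(λ) = g0 + g1 λ`. Equating the two gives
`u' + λ' - (f2/g1) u = F(λ)/G(λ)`, and one step of dividing `F` by `G` turns
`F(λ)/G(λ) - (f2/g1) λ` into the linear remainder over `G(λ)`, which is (6b).
-/

namespace AbelMatching

variable {K : Type*} [Field K]

theorem mul_div_eq_of_5a {g g1 f2 a q u u' : K} (hg : g ≠ 0) (hg1 : g1 ≠ 0)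
    (hq : g * q = g1 * u) (ha : -a * q = f2 * u - g1 * u') :
    a * u / g = u' - f2 / g1 * u := by
  field_simp
  linear_combination (-a) * hq - g * ha

theorem mul_div_eq_of_5c {G F g a u l' : K} (hu : u ≠ 0) (hG : G ≠ 0)
    (h : a * G / g = (F - G * l') / u) :
    a * u / g = F / G - l' := by
  calc a * u / g = a * G / g * u / G := by field_simp
    _ = F / G - l' := by rw [h]; field_simp

theorem quadratic_div_linear_sub_mul {g0 g1 f0 f1 f2 l : K} (hg1 : g1 ≠ 0)
    (hG : g0 + g1 * l ≠ 0) :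
    (f0 + f1 * l + f2 * l ^ 2) / (g0 + g1 * l) - f2 / g1 * l =
      (f0 + (f1 - g0 / g1 * f2) * l) / (g0 + g1 * l) := by
  rw [eq_div_iff hG, sub_mul, div_mul_cancel₀ _ hG]
  field_simp
  ring

end AbelMatching

open AbelMatching in
theorem abel_matching_6b_general (g0 g1 f0 f1 f2 g g' a q u u' l l' : ℝ)
    (hg : g ≠ 0) (hg1 : g1 ≠ 0) (hu : u ≠ 0) (hgl : g0 + g1 * l ≠ 0)
    (h5a1 : g' = g0 + g1 * l) (h5a2 : g * q = g1 * u) (h5a3 : -a * q = f2 * u - g1 * u')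
    (h5c : a * g' / g = (f0 + f1 * l + f2 * l ^ 2 - (g0 + g1 * l) * l') / u) :
    (u' + l') - (f2 / g1) * (u + l) -
      (f0 + (f1 - (g0 / g1) * f2) * l) / (g0 + g1 * l) = 0 := by
  subst h5a1
  have from5a := mul_div_eq_of_5a hg hg1 h5a2 h5a3
  have from5c := mul_div_eq_of_5c hu hgl h5c
  rw [← quadratic_div_linear_sub_mul hg1 hgl]
  linear_combination from5c - from5a

/-- from the coefficient-matching relations (5a) and (5c) of the paper,
the linear relation (6b) for `u + λ` follows. -/
theorem abel_matching_6b (x g0 g1 f0 f1 f2 g g' a q u u' l l' : ℝ)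
    (hg : g ≠ 0) (hg1 : g1 ≠ 0) (hu : u ≠ 0) (hgl : g0 + g1 * l ≠ 0)
    (h5a1 : g' = g0 + g1 * l) (h5a2 : g * q = g1 * u) (h5a3 : -a * q = f2 * u - g1 * u')
    (h5c : a * g' / g = (f0 + f1 * l + f2 * l ^ 2 - (g0 + g1 * l) * l') / u) :
    (u' + l') - (f2 / g1) * (u + l) -
      (f0 + (f1 - (g0 / g1) * f2) * l) / (g0 + g1 * l) = 0 :=
  abel_matching_6b_general g0 g1 f0 f1 f2 g g' a q u u' l l' hg hg1 hu hgl h5a1 h5a2 h5a3 h5c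
end

section
/- Let x ∈ ℝ, let g0, g1, f0, f1, f2 : ℝ → ℝ with g1(x) ≠ 0, and suppose the integrability condition g0(x)·g1(x)·f1(x) = g1(x)²·f0(x) + g0(x)²·f2(x) holds. If y : ℝ → ℝ is differentiable at x and satisfies the linear equation y'(x) = (f2(x)/g1(x))·y(x) + (f1(x)·g1(x) − g0(x)·f2(x))/g1(x)², then y solves the second-kind Abel equation at x: (g0(x) + g1(x)·y(x))·y'(x) = f2(x)·y(x)² + f1(x)·y(x) + f0(x). -/
/-! The integrability condition says exactly that the quadratic `f2 y² + f1 y + f0` has the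
factor `g0 + g1 y`, the cofactor being the right-hand side of the linear equation; multiplying
that equation by `g0 + g1 y` therefore gives the Abel equation. -/

theorem quadratic_eq_mul_linear_of_integrability {K : Type*} [Field K] {g0 g1 f0 f1 f2 : K}
    (hg1 : g1 ≠ 0) (hint : g0 * g1 * f1 = g1 ^ 2 * f0 + g0 ^ 2 * f2) (y : K) :
    f2 * y ^ 2 + f1 * y + f0 =
      (g0 + g1 * y) * ((f2 / g1) * y + (f1 * g1 - g0 * f2) / g1 ^ 2) := by
  field_simp
  linear_combination -hint

theorem abel_linear_implies_abel_general (x : ℝ) (g0 g1 f0 f1 f2 y : ℝ → ℝ)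
    (hg1 : g1 x ≠ 0)
    (hint : g0 x * g1 x * f1 x = g1 x ^ 2 * f0 x + g0 x ^ 2 * f2 x)
    (hlin : deriv y x = (f2 x / g1 x) * y x +
      (f1 x * g1 x - g0 x * f2 x) / g1 x ^ 2) :
    (g0 x + g1 x * y x) * deriv y x =
      f2 x * (y x) ^ 2 + f1 x * y x + f0 x := by
  rw [hlin, quadratic_eq_mul_linear_of_integrability hg1 hint]

/-- under the integrability condition `g0·g1·f1 = g1²·f0 + g0²·f2`,
any solution at `x` of the linear equation
`y' = (f2/g1)·y + (f1·g1 − g0·f2)/g1²` solves the second-kind Abel equation at `x`. -/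
theorem abel_linear_implies_abel (x : ℝ) (g0 g1 f0 f1 f2 y : ℝ → ℝ)
    (hg1 : g1 x ≠ 0)
    (hint : g0 x * g1 x * f1 x = g1 x ^ 2 * f0 x + g0 x ^ 2 * f2 x)
    (hy : DifferentiableAt ℝ y x)
    (hlin : deriv y x = (f2 x / g1 x) * y x +
      (f1 x * g1 x - g0 x * f2 x) / g1 x ^ 2) :
    (g0 x + g1 x * y x) * deriv y x =
      f2 x * (y x) ^ 2 + f1 x * y x + f0 x :=
  abel_linear_implies_abel_general x g0 g1 f0 f1 f2 y hg1 hint hlin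
end

section
/- Let I ⊆ ℝ be an open interval and let g0, g1, f0, f1, f2 : ℝ → ℝ with g1(x) ≠ 0 for all x ∈ I, satisfying the integrability condition g0(x)·g1(x)·f1(x) = g1(x)²·f0(x) + g0(x)²·f2(x) for all x ∈ I. Suppose F, G : ℝ → ℝ are differentiable on I with F'(x) = f2(x)/g1(x) and G'(x) = ((f1(x)·g1(x) − g0(x)·f2(x))/g1(x)²)·exp(−F(x)) for all x ∈ I. Then for every constant c ∈ ℝ, the function y(x) = exp(F(x))·(c + G(x)) is differentiable on I and solves the second-kind Abel equation on I: (g0(x) + g1(x)·y(x))·y'(x) = f2(x)·y(x)² + f1(x)·y(x) + f0(x) for all x ∈ I. -/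
/-! Under the integrability condition the Abel equation is implied by the linear equation
`y' = (f2 / g1) y + (f1 g1 - g0 f2) / g1²`: multiplying it by `g0 + g1 y` leaves the constant
term `g0 (f1 g1 - g0 f2) / g1²`, which the condition makes equal to `f0`.
Moreover `exp F · (c + G)` is the variation-of-constants solution of that linear equation. -/

open Real

theorem abel_of_linear_derivative {g0 g1 f0 f1 f2 y y' : ℝ} (hg1 : g1 ≠ 0)
    (hint : g0 * g1 * f1 = g1 ^ 2 * f0 + g0 ^ 2 * f2)
    (hy' : y' = f2 / g1 * y + (f1 * g1 - g0 * f2) / g1 ^ 2) :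
    (g0 + g1 * y) * y' = f2 * y ^ 2 + f1 * y + f0 := by
  rw [hy']
  field_simp
  linear_combination hint

theorem hasDerivAt_exp_mul_const_add {F G : ℝ → ℝ} {a b x : ℝ} (c : ℝ)
    (hF : HasDerivAt F a x) (hG : HasDerivAt G (b * exp (-F x)) x) :
    HasDerivAt (fun t => exp (F t) * (c + G t)) (a * (exp (F x) * (c + G x)) + b) x := by
  refine (hF.exp.mul (hG.const_add c)).congr_deriv ?_
  rw [exp_neg]
  field_simp

/-- under the integrability condition, the quadrature formula
`y = exp(F)·(c + G)` solves the second-kind Abel equation (1) on `Ioo p r`. -/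
theorem abel_integrable_solution (p r : ℝ) (g0 g1 f0 f1 f2 F G : ℝ → ℝ)
    (hg1 : ∀ x ∈ Set.Ioo p r, g1 x ≠ 0)
    (hint : ∀ x ∈ Set.Ioo p r,
      g0 x * g1 x * f1 x = g1 x ^ 2 * f0 x + g0 x ^ 2 * f2 x)
    (hF : ∀ x ∈ Set.Ioo p r, DifferentiableAt ℝ F x ∧ deriv F x = f2 x / g1 x)
    (hG : ∀ x ∈ Set.Ioo p r, DifferentiableAt ℝ G x ∧
      deriv G x = ((f1 x * g1 x - g0 x * f2 x) / g1 x ^ 2) * Real.exp (-F x))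
    (c : ℝ) :
    ∀ x ∈ Set.Ioo p r,
      DifferentiableAt ℝ (fun t => Real.exp (F t) * (c + G t)) x ∧
      (g0 x + g1 x * (Real.exp (F x) * (c + G x))) *
          deriv (fun t => Real.exp (F t) * (c + G t)) x =
        f2 x * (Real.exp (F x) * (c + G x)) ^ 2 +
          f1 x * (Real.exp (F x) * (c + G x)) + f0 x := by
  intro x hx
  obtain ⟨hFdiff, hFderiv⟩ := hF x hx
  obtain ⟨hGdiff, hGderiv⟩ := hG x hx
  have hy := hasDerivAt_exp_mul_const_add c (hFderiv ▸ hFdiff.hasDerivAt)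
    (hGderiv ▸ hGdiff.hasDerivAt)
  exact ⟨hy.differentiableAt, abel_of_linear_derivative (hg1 x hx) (hint x hx) hy.deriv⟩
end
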